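/- arXiv:1602.05244 — 4 statements merged into one kernel-verified Lean document; each statement's English description precedes it below -/
import Mathlib

section
/- Let k be a field of characteristic 0, let m ≥ 1 be an integer, and let g be a finite-dimensional Lie algebra over k equipped with a ℤ/m-grading (g_i)_{i ∈ ℤ/m}. Let δ ∈ ℤ/m and suppose x ∈ g_δ, h ∈ g_0, f ∈ g_{-δ} satisfy [h, x] = 2·x, [h, f] = −2·f and [x, f] = h. For n ∈ ℤ let g^{(n)} = {y ∈ g : [h, y] = n·y} (the n-eigenspace of ad(h), with n viewed as an element of k). Then for every y ∈ g_δ lying in the sum Σ_{n ≥ 2} g^{(n)} there exists z ∈ g_0 lying in the sum Σ_{n ≥ 0} g^{(n)} such that [x, z] = y. (The surjectivity of ad(x) : p^x_0 → p^x_η established in the proof of 2.9(e).) -/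
/-!
In a finite-dimensional module over an `sl₂`-triple `(e, h, f)`, `e` maps the `(n - 2)`-eigenspace
of `h` onto the `n`-eigenspace for every integer `n ≥ 1`: if `e ^ (r + 1) m = 0`, then
`m - c⁻¹ • ⁅e, ⁅f, m⁆⁆` with `c = (r + 1) (n + r)` is killed by `e ^ r`, so induction on `r`
produces a preimage. Applied to the adjoint module this gives `z` in the sum of the
nonnegative eigenspaces of `ad h` with `⁅x, z⁆ = y`. Its degree-`0` component still works: the
grading projections commute with `ad h` because `h ∈ g₀`, and `ad x` shifts degrees by `δ`.
-/

open LieModule Module.End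

section Sl2

variable {k L M : Type*} [Field k] [LieRing L] [LieAlgebra k L] [AddCommGroup M] [Module k M]
  [LieRingModule L M] [LieModule k L M] {e h f : L}

lemma lie_mem_eigenspace_toEnd_add {a : L} {α μ : k} (ha : ⁅h, a⁆ = α • a) {m : M}
    (hm : m ∈ eigenspace (toEnd k L M h) μ) :
    ⁅a, m⁆ ∈ eigenspace (toEnd k L M h) (μ + α) := by
  rw [mem_eigenspace_iff, toEnd_apply_apply] at hm ⊢
  rw [leibniz_lie, ha, hm, smul_lie, lie_smul, add_smul, add_comm]

lemma pow_toEnd_apply_mem_eigenspace {a : L} {α μ : k} (ha : ⁅h, a⁆ = α • a) {m : M}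
    (hm : m ∈ eigenspace (toEnd k L M h) μ) (j : ℕ) :
    (toEnd k L M a ^ j) m ∈ eigenspace (toEnd k L M h) (μ + j * α) := by
  induction j with
  | zero => simpa using hm
  | succ j ih =>
    rw [pow_succ', mul_apply, toEnd_apply_apply, Nat.cast_succ, add_one_mul, ← add_assoc]
    exact lie_mem_eigenspace_toEnd_add ha ih

lemma pow_succ_toEnd_apply_lie (hhe : ⁅h, e⁆ = (2 : k) • e) (hef : ⁅e, f⁆ = h) {m : M} {μ : k}
    (hm : m ∈ eigenspace (toEnd k L M h) μ) (j : ℕ) :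
    (toEnd k L M e ^ (j + 1)) ⁅f, m⁆ =
      ⁅f, (toEnd k L M e ^ (j + 1)) m⁆ + ((j + 1) * (μ + j)) • (toEnd k L M e ^ j) m := by
  induction j with
  | zero =>
    rw [mem_eigenspace_iff, toEnd_apply_apply] at hm
    simp [leibniz_lie e f m, hef, hm, add_comm]
  | succ j ih =>
    have he (i : ℕ) (x : M) : (toEnd k L M e ^ (i + 1)) x = ⁅e, (toEnd k L M e ^ i) x⁆ := by
      simp [pow_succ']
    have hh := mem_eigenspace_iff.mp (pow_toEnd_apply_mem_eigenspace hhe hm (j + 1))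
    rw [toEnd_apply_apply] at hh
    rw [he (j + 1), ih, lie_add, lie_smul, leibniz_lie e f, hef, hh, ← he, ← he]
    push_cast
    module

variable [CharZero k]

lemma exists_pow_toEnd_apply_eq_zero [Module.Finite k M] {a : L} {α μ : k}
    (hα : α ≠ 0) (ha : ⁅h, a⁆ = α • a) {m : M} (hm : m ∈ eigenspace (toEnd k L M h) μ) :
    ∃ r : ℕ, (toEnd k L M a ^ r) m = 0 := by
  by_contra! hne
  have hinj : Function.Injective fun j : ℕ ↦ μ + j * α := fun i j hij ↦ by simpa [hα] using hij
  refine Set.infinite_range_of_injective hinj ((toEnd k L M h).finite_hasEigenvalue.subset ?_)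
  rintro _ ⟨j, rfl⟩
  exact hasEigenvalue_of_hasEigenvector ⟨pow_toEnd_apply_mem_eigenspace ha hm j, hne j⟩

lemma mem_map_toEnd_eigenspace_of_pow_eq_zero (hhe : ⁅h, e⁆ = (2 : k) • e)
    (hhf : ⁅h, f⁆ = (-2 : k) • f) (hef : ⁅e, f⁆ = h) {n : ℤ} (hn : 1 ≤ n) (r : ℕ) {m : M}
    (hm : m ∈ eigenspace (toEnd k L M h) n) (hr : (toEnd k L M e ^ r) m = 0) :
    m ∈ (eigenspace (toEnd k L M h) (n - 2)).map (toEnd k L M e) := by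
  induction r generalizing m with
  | zero =>
    rw [pow_zero, one_apply] at hr
    simp [hr]
  | succ r ih =>
    set c : k := (r + 1) * (n + r)
    have hc : c ≠ 0 := by
      have : ((((r + 1) * (n + r) : ℤ)) : k) ≠ 0 := Int.cast_ne_zero.mpr (by positivity)
      simpa [c] using this
    have hfm : ⁅f, m⁆ ∈ eigenspace (toEnd k L M h) (n - 2) := by
      simpa [sub_eq_add_neg] using lie_mem_eigenspace_toEnd_add hhf hm
    have hefm : ⁅e, ⁅f, m⁆⁆ ∈ eigenspace (toEnd k L M h) n := by
      simpa using lie_mem_eigenspace_toEnd_add hhe hfm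
    have hr' : (toEnd k L M e ^ r) (m - c⁻¹ • ⁅e, ⁅f, m⁆⁆) = 0 := by
      have := pow_succ_toEnd_apply_lie hhe hef hm r
      rw [hr, lie_zero, zero_add, pow_succ, mul_apply, toEnd_apply_apply] at this
      rw [map_sub, map_smul, this, smul_smul, inv_mul_cancel₀ hc, one_smul, sub_self]
    obtain ⟨u, hu, hum⟩ := ih (sub_mem hm (Submodule.smul_mem _ _ hefm)) hr'
    refine ⟨u + c⁻¹ • ⁅f, m⁆, add_mem hu (Submodule.smul_mem _ _ hfm), ?_⟩
    rw [map_add, hum, map_smul, toEnd_apply_apply, sub_add_cancel]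

variable [Module.Finite k M]

lemma eigenspace_toEnd_le_map_eigenspace (hhe : ⁅h, e⁆ = (2 : k) • e)
    (hhf : ⁅h, f⁆ = (-2 : k) • f) (hef : ⁅e, f⁆ = h) {n : ℤ} (hn : 1 ≤ n) :
    eigenspace (toEnd k L M h) n ≤ (eigenspace (toEnd k L M h) (n - 2)).map (toEnd k L M e) :=
  fun _ hm ↦
    have ⟨r, hr⟩ := exists_pow_toEnd_apply_eq_zero two_ne_zero hhe hm
    mem_map_toEnd_eigenspace_of_pow_eq_zero hhe hhf hef hn r hm hr

lemma iSup_eigenspace_toEnd_le_map_iSup (hhe : ⁅h, e⁆ = (2 : k) • e)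
    (hhf : ⁅h, f⁆ = (-2 : k) • f) (hef : ⁅e, f⁆ = h) :
    ⨆ n ∈ {n : ℤ | 2 ≤ n}, eigenspace (toEnd k L M h) n ≤
      (⨆ n ∈ {n : ℤ | 0 ≤ n}, eigenspace (toEnd k L M h) n).map (toEnd k L M e) := by
  refine iSup₂_le fun n hn ↦ (eigenspace_toEnd_le_map_eigenspace hhe hhf hef
    (by simp only [Set.mem_ofPred_eq] at hn; omega)).trans (Submodule.map_mono ?_)
  refine le_iSup₂_of_le (n - 2) (by simp only [Set.mem_ofPred_eq] at hn ⊢; omega) ?_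
  rw [Int.cast_sub, Int.cast_two]

end Sl2

lemma Module.End.mapsTo_iSup_eigenspace_of_comm {R M ι : Type*} [CommRing R] [AddCommGroup M]
    [Module R M] {f g : End R M} (hfg : Commute f g) (s : Set ι) (μ : ι → R) :
    Set.MapsTo g (⨆ i ∈ s, f.eigenspace (μ i) : Submodule R M)
      (⨆ i ∈ s, f.eigenspace (μ i) : Submodule R M) := by
  suffices (⨆ i ∈ s, f.eigenspace (μ i)) ≤ (⨆ i ∈ s, f.eigenspace (μ i)).comap g from
    fun _ hz ↦ this hz
  exact iSup₂_le fun i hi _ hv ↦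
    le_iSup₂ (f := fun i (_ : i ∈ s) ↦ f.eigenspace (μ i)) i hi
      (mapsTo_genEigenspace_of_comm hfg (μ i) 1 hv)

open DirectSum

noncomputable abbrev DirectSum.IsInternal.gradedLieAlgebra {ι R L : Type*} [DecidableEq ι]
    [AddCommMonoid ι] [CommRing R] [LieRing L] [LieAlgebra R L] {ℒ : ι → Submodule R L}
    (hℒ : IsInternal ℒ) (hbr : ∀ i j, ∀ x ∈ ℒ i, ∀ y ∈ ℒ j, ⁅x, y⁆ ∈ ℒ (i + j)) :
    GradedLieAlgebra ℒ :=
  { hℒ.chooseDecomposition with bracket_mem := @fun _ _ _ _ hx hy ↦ hbr _ _ _ hx _ hy }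

namespace GradedLieAlgebra

variable {ι R L : Type*} [DecidableEq ι] [AddCancelCommMonoid ι] [CommRing R] [LieRing L]
  [LieAlgebra R L] (ℒ : ι → Submodule R L) [GradedLieAlgebra ℒ] {i j : ι}

def proj (i : ι) : L →ₗ[R] L :=
  (ℒ i).subtype ∘ₗ component R ι (fun i ↦ ℒ i) i ∘ₗ (decomposeLinearEquiv ℒ).toLinearMap

lemma proj_apply (z : L) : proj ℒ i z = decompose ℒ z i := rfl

lemma proj_mem (z : L) : proj ℒ i z ∈ ℒ i := (decompose ℒ z i).2

lemma proj_of_mem {a : L} (ha : a ∈ ℒ i) : proj ℒ i a = a := decompose_of_mem_same ℒ ha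

lemma proj_add_lie_of_mem {a : L} (ha : a ∈ ℒ i) (z : L) :
    proj ℒ (i + j) ⁅a, z⁆ = ⁅a, proj ℒ j z⁆ := by
  induction z using DirectSum.Decomposition.inductionOn ℒ with
  | zero => simp
  | @homogeneous j' m =>
    have ham : ⁅a, (m : L)⁆ ∈ ℒ (i + j') := SetLike.GradedBracket.bracket_mem ha m.2
    by_cases hj : j' = j
    · subst hj
      rw [proj_of_mem ℒ ham, proj_of_mem ℒ m.2]
    · rw [proj_apply, proj_apply, decompose_of_mem_ne ℒ ham (by simpa using hj),
        decompose_of_mem_ne ℒ m.2 hj, lie_zero]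
  | add z z' hz hz' => rw [lie_add, map_add, map_add, hz, hz', lie_add]

lemma commute_ad_proj {a : L} (ha : a ∈ ℒ 0) (j : ι) :
    Commute (LieAlgebra.ad R L a) (proj ℒ j) :=
  LinearMap.ext fun z ↦ by simpa using (proj_add_lie_of_mem ℒ ha z).symm

end GradedLieAlgebra

theorem ad_surjective_on_spiral_general
    (k : Type*) [Field k] [CharZero k]
    (L : Type*) [LieRing L] [LieAlgebra k L] [Module.Finite k L]
    (m : ℕ)
    (g : ZMod m → Submodule k L)
    (hdecomp : DirectSum.IsInternal g)
    (hbracket : ∀ i j : ZMod m, ∀ x ∈ g i, ∀ y ∈ g j, ⁅x, y⁆ ∈ g (i + j))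
    (δ : ZMod m) (x h f : L)
    (hx : x ∈ g δ) (hh : h ∈ g (0 : ZMod m))
    (hhx : ⁅h, x⁆ = (2 : k) • x) (hhf : ⁅h, f⁆ = (-2 : k) • f) (hxf : ⁅x, f⁆ = h)
    (y : L) (hy : y ∈ g δ)
    (hy2 : y ∈ ⨆ n ∈ {n : ℤ | 2 ≤ n},
      Module.End.eigenspace (LieAlgebra.ad k L h) ((n : k))) :
    ∃ z ∈ g (0 : ZMod m),
      z ∈ (⨆ n ∈ {n : ℤ | 0 ≤ n},
        Module.End.eigenspace (LieAlgebra.ad k L h) ((n : k))) ∧ ⁅x, z⁆ = y := by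
  let := hdecomp.gradedLieAlgebra hbracket
  obtain ⟨z, hz, hxz⟩ := iSup_eigenspace_toEnd_le_map_iSup hhx hhf hxf hy2
  refine ⟨GradedLieAlgebra.proj g 0 z, GradedLieAlgebra.proj_mem g z,
    mapsTo_iSup_eigenspace_of_comm (GradedLieAlgebra.commute_ad_proj g hh 0) _ _ hz, ?_⟩
  rw [← GradedLieAlgebra.proj_add_lie_of_mem g hx, add_zero,
    ← GradedLieAlgebra.proj_of_mem g hy]
  exact congrArg (GradedLieAlgebra.proj g δ) hxz

/-- Surjectivity of `ad(x) : p^x_0 → p^x_η` from the proof of 2.9(e): given a graded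
`sl₂`-triple `(x, h, f)` in a `ℤ/m`-graded finite-dimensional Lie algebra over a field of
characteristic zero, every `y ∈ g_δ` lying in the sum of the `ad(h)`-eigenspaces for
eigenvalues `n ≥ 2` is of the form `[x, z]` for some `z ∈ g_0` lying in the sum of the
`ad(h)`-eigenspaces for eigenvalues `n ≥ 0`. -/
theorem ad_surjective_on_spiral
    (k : Type*) [Field k] [CharZero k]
    (L : Type*) [LieRing L] [LieAlgebra k L] [Module.Finite k L]
    (m : ℕ) (hm : 1 ≤ m)
    (g : ZMod m → Submodule k L)
    (hdecomp : DirectSum.IsInternal g)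
    (hbracket : ∀ i j : ZMod m, ∀ x ∈ g i, ∀ y ∈ g j, ⁅x, y⁆ ∈ g (i + j))
    (δ : ZMod m) (x h f : L)
    (hx : x ∈ g δ) (hh : h ∈ g (0 : ZMod m)) (hf : f ∈ g (-δ))
    (hhx : ⁅h, x⁆ = (2 : k) • x) (hhf : ⁅h, f⁆ = (-2 : k) • f) (hxf : ⁅x, f⁆ = h)
    (y : L) (hy : y ∈ g δ)
    (hy2 : y ∈ ⨆ n ∈ {n : ℤ | 2 ≤ n},
      Module.End.eigenspace (LieAlgebra.ad k L h) ((n : k))) :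
    ∃ z ∈ g (0 : ZMod m),
      z ∈ (⨆ n ∈ {n : ℤ | 0 ≤ n},
        Module.End.eigenspace (LieAlgebra.ad k L h) ((n : k))) ∧ ⁅x, z⁆ = y :=
  ad_surjective_on_spiral_general k L m g hdecomp hbracket δ x h f hx hh hhx hhf hxf y hy hy2
end

section
/- Let k be a field, m ≥ 1 an integer, and g a finite-dimensional Lie algebra over k equipped with a ℤ/m-grading (g_i)_{i ∈ ℤ/m}. Let ε ∈ {1, −1} and let (p_N)_{N ∈ ℤ} be a family of k-subspaces of g such that: p_N ⊆ g_{N̄} for all N ∈ ℤ; [p_N, p_{N'}] ⊆ p_{N+N'} for all N, N' ∈ ℤ; and there exists C ∈ ℤ such that p_N = 0 whenever εN ≥ C and p_N = g_{N̄} whenever εN ≤ −C. Then every element x ∈ p_N with εN > 0 is ad-nilpotent. (Claim 2.5(d): the positive part of an ε-spiral consists of nilpotent elements.) -/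
/-- Claim 2.5(d): the positive part of an `ε`-spiral in a `ℤ/m`-graded finite-dimensional
Lie algebra consists of ad-nilpotent elements. -/
theorem spiral_positive_part_nilpotent
    (k : Type*) [Field k]
    (L : Type*) [LieRing L] [LieAlgebra k L] [Module.Finite k L]
    (m : ℕ) (hm : 1 ≤ m)
    (g : ZMod m → Submodule k L)
    (hdecomp : DirectSum.IsInternal g)
    (hbracket : ∀ i j : ZMod m, ∀ x ∈ g i, ∀ y ∈ g j, ⁅x, y⁆ ∈ g (i + j))
    (ε : ℤ) (hε : ε = 1 ∨ ε = -1)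
    (p : ℤ → Submodule k L)
    (hsub : ∀ N : ℤ, p N ≤ g ((N : ZMod m)))
    (hbr : ∀ N N' : ℤ, ∀ x ∈ p N, ∀ y ∈ p N', ⁅x, y⁆ ∈ p (N + N'))
    (C : ℤ)
    (htop : ∀ N : ℤ, C ≤ ε * N → p N = ⊥)
    (hbot : ∀ N : ℤ, ε * N ≤ -C → p N = g ((N : ZMod m)))
    (N : ℤ) (hN : 0 < ε * N) (x : L) (hx : x ∈ p N) :
    IsNilpotent (LieAlgebra.ad k L x) := by
  haveI : NeZero m := ⟨by omega⟩
  have hm1 : (1 : ℤ) ≤ m := by exact_mod_cast hm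
  have heN : 1 ≤ ε * N := hN
  -- a big multiple of m
  set D : ℤ := m * (m + C.natAbs) with hD
  have hDge : (m : ℤ) + C.natAbs ≤ D := by nlinarith [Int.natCast_natAbs C, abs_nonneg C]
  have hCabs : C ≤ (C.natAbs : ℤ) := Int.le_natAbs
  have hCabs' : -(C.natAbs : ℤ) ≤ C := by omega
  -- representatives
  set M : ZMod m → ℤ := fun i => (ZMod.val i : ℤ) - ε * D with hM
  have hvali : ∀ i : ZMod m, (ZMod.val i : ℤ) < m := by
    intro i; exact_mod_cast ZMod.val_lt i
  have hvali0 : ∀ i : ZMod m, 0 ≤ (ZMod.val i : ℤ) := fun i => Int.natCast_nonneg _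
  have hεM : ∀ i : ZMod m, ε * M i ≤ -C ∧ -((m : ℤ) + D) ≤ ε * M i := by
    intro i
    have h1 := hvali i; have h2 := hvali0 i
    rcases hε with h | h <;> simp only [hM, h] <;> constructor <;> nlinarith
  have hMcast : ∀ i : ZMod m, ((M i : ℤ) : ZMod m) = i := by
    intro i
    have hdvd : ((D : ℤ) : ZMod m) = 0 := by
      have : (m : ℤ) ∣ D := ⟨m + C.natAbs, rfl⟩
      exact (ZMod.intCast_zmod_eq_zero_iff_dvd D m).mpr this
    simp only [hM]
    push_cast
    rw [hdvd]
    simp [ZMod.natCast_val, ZMod.cast_id]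
  have hgi : ∀ i : ZMod m, g i = p (M i) := by
    intro i
    rw [hbot (M i) (hεM i).1, hMcast]
  -- the iterate lemma
  have hiter : ∀ (j : ℕ) (Mv : ℤ) (y : L), y ∈ p Mv →
      ((LieAlgebra.ad k L x) ^ j) y ∈ p (Mv + j * N) := by
    intro j
    induction j with
    | zero => intro Mv y hy; simpa using hy
    | succ j ih =>
      intro Mv y hy
      have h1 := hbr N (Mv + j * N) x hx _ (ih Mv y hy)
      have h2 : N + (Mv + (j : ℤ) * N) = Mv + ((j : ℕ) + 1 : ℕ) * N := by
        push_cast; ring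
      rw [h2] at h1
      rw [pow_succ']
      simpa [LieAlgebra.ad_apply] using h1
  -- choose n
  set n : ℕ := (C + m + D).toNat with hn
  have hnge : (C + m + D : ℤ) ≤ n := Int.self_le_toNat _
  have hn0 : (0 : ℤ) ≤ n := Int.natCast_nonneg n
  have hkey : ∀ i : ZMod m, C ≤ ε * (M i + n * N) := by
    intro i
    have h1 := (hεM i).2
    have h2 : (n : ℤ) * 1 ≤ (n : ℤ) * (ε * N) :=
      mul_le_mul_of_nonneg_left heN hn0
    nlinarith
  -- conclude
  refine ⟨n, ?_⟩
  ext y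
  simp only [LinearMap.zero_apply]
  have hy : y ∈ ⨆ i, g i := by
    rw [hdecomp.submodule_iSup_eq_top]; trivial
  induction hy using Submodule.iSup_induction' with
  | mem i z hz =>
    rw [hgi i] at hz
    have h1 := hiter n (M i) z hz
    rw [htop (M i + n * N) (hkey i)] at h1
    simpa using h1
  | zero => simp
  | add z w _ _ hz hw => simp [map_add, hz, hw]
end

section
/- Let k be a field, m ≥ 1 an integer, and g a finite-dimensional Lie algebra over k whose Killing form κ is nondegenerate, equipped with a (ℤ × ℤ/m)-bigrading (q(k,i))_{(k,i) ∈ ℤ × ℤ/m}. Fix s ∈ ℤ and for each N ∈ ℤ set p_N = Σ_{k ≥ sN} q(k, N̄), u_N = Σ_{k > sN} q(k, N̄), and g_{N̄} = Σ_{k ∈ ℤ} q(k, N̄). Then for every N ∈ ℤ one has u_N = {x ∈ g_{N̄} : κ(x, y) = 0 for all y ∈ p_{-N}}, i.e., the nilradical of the spiral equals the Killing-orthogonal complement of p_{-N} inside g_{N̄}. (The description of the nilradical of an ε-spiral in 2.5, with s = rε.) -/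
/-!
Write `q_A = ⨆ a ∈ A, q a` for a set `A` of bidegrees. For `x ∈ q a` and `y ∈ q b`, `ad x ∘ ad y`
shifts bidegrees by `a + b`, so its trace vanishes unless `a + b = 0`: `q_A` and `q_B` are
`κ`-orthogonal whenever `0 ∉ A + B`. Hence `u_N ⊥ p_{-N}`. Conversely `g_{N̄} = u_N ⊕ q_V` with
`V = {(c, N̄) | c ≤ sN}`, and `p_{-N} = q_{-V}`. The `q_V`-component of an element of `g_{N̄}`
orthogonal to `p_{-N}` is thus orthogonal to `q_{-V}` and, by degree, to every other `q b`, so it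
vanishes by nondegeneracy of `κ`.
-/

open Set

namespace Submodule

theorem map₂_biSup_biSup_eq_bot {R M N P ι κ : Type*} [CommSemiring R]
    [AddCommMonoid M] [AddCommMonoid N] [AddCommMonoid P] [Module R M] [Module R N] [Module R P]
    {f : M →ₗ[R] N →ₗ[R] P} {A : Set ι} {B : Set κ} {U : ι → Submodule R M}
    {V : κ → Submodule R N} (h : ∀ a ∈ A, ∀ b ∈ B, map₂ f (U a) (V b) = ⊥) :
    map₂ f (⨆ a ∈ A, U a) (⨆ b ∈ B, V b) = ⊥ := by
  simp only [map₂_iSup_left, map₂_iSup_right, iSup_eq_bot]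
  exact fun b hb a ha => h a ha b hb

end Submodule

namespace LieAlgebra

variable {k L ι : Type*} [Field k] [LieRing L] [LieAlgebra k L] [Module.Finite k L]
  [DecidableEq ι] {q : ι → Submodule k L}

theorem killingForm_eq_zero_of_add_ne_zero [AddCancelCommMonoid ι]
    (hq : DirectSum.IsInternal q) (hbracket : ∀ a b, ∀ x ∈ q a, ∀ y ∈ q b, ⁅x, y⁆ ∈ q (a + b))
    {a b : ι} (hab : a + b ≠ 0) {x y : L} (hx : x ∈ q a) (hy : y ∈ q b) :
    killingForm k L x y = 0 := by
  rw [killingForm_apply_apply]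
  refine LinearMap.trace_eq_zero_of_mapsTo_ne hq (a + b + ·)
    (fun c hc => hab (add_eq_right.mp hc)) fun c z hz => ?_
  rw [add_assoc]
  exact hbracket a _ x hx _ (hbracket b c y hy z hz)

theorem killingForm_eq_zero_of_mem_biSup [AddCancelCommMonoid ι]
    (hq : DirectSum.IsInternal q) (hbracket : ∀ a b, ∀ x ∈ q a, ∀ y ∈ q b, ⁅x, y⁆ ∈ q (a + b))
    {A B : Set ι} (hAB : ∀ a ∈ A, ∀ b ∈ B, a + b ≠ 0) {x y : L}
    (hx : x ∈ ⨆ a ∈ A, q a) (hy : y ∈ ⨆ b ∈ B, q b) :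
    killingForm k L x y = 0 := by
  have hbot : Submodule.map₂ (killingForm k L) (⨆ a ∈ A, q a) (⨆ b ∈ B, q b) = ⊥ :=
    Submodule.map₂_biSup_biSup_eq_bot fun a ha b hb => eq_bot_iff.2 <|
      Submodule.map₂_le.2 fun x hx y hy => by
        rw [killingForm_eq_zero_of_add_ne_zero hq hbracket (hAB a ha b hb) hx hy]
        exact zero_mem _
  simpa [hbot] using Submodule.apply_mem_map₂ (killingForm k L) hx hy

variable [AddCommGroup ι]

theorem eq_zero_of_mem_biSup_of_killingForm_eq_zero
    (hq : DirectSum.IsInternal q) (hbracket : ∀ a b, ∀ x ∈ q a, ∀ y ∈ q b, ⁅x, y⁆ ∈ q (a + b))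
    (hκ : (killingForm k L).Nondegenerate) {V : Set ι} {x : L} (hx : x ∈ ⨆ a ∈ V, q a)
    (horth : ∀ y ∈ ⨆ b ∈ -V, q b, killingForm k L x y = 0) :
    x = 0 := by
  refine hκ.1 x fun y => ?_
  have hy : y ∈ (⨆ b ∈ -V, q b) ⊔ ⨆ b ∈ (-V)ᶜ, q b := by
    rw [← iSup_union, union_compl_self, iSup_univ, hq.submodule_iSup_eq_top]
    trivial
  obtain ⟨y₁, hy₁, y₂, hy₂, rfl⟩ := Submodule.mem_sup.1 hy
  have hdegree : ∀ a ∈ V, ∀ b ∈ (-V)ᶜ, a + b ≠ 0 := fun a ha b hb hab =>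
    hb (by rwa [eq_neg_of_add_eq_zero_right hab, neg_mem_neg])
  rw [map_add, horth y₁ hy₁, killingForm_eq_zero_of_mem_biSup hq hbracket hdegree hx hy₂,
    add_zero]

theorem mem_biSup_iff_mem_biSup_and_killingForm_eq_zero
    (hq : DirectSum.IsInternal q) (hbracket : ∀ a b, ∀ x ∈ q a, ∀ y ∈ q b, ⁅x, y⁆ ∈ q (a + b))
    (hκ : (killingForm k L).Nondegenerate) {U G P : Set ι} (hUG : U ⊆ G)
    (hUP : ∀ a ∈ U, ∀ b ∈ P, a + b ≠ 0) (hGP : -(G \ U) ⊆ P) {x : L} :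
    x ∈ ⨆ a ∈ U, q a ↔ x ∈ ⨆ a ∈ G, q a ∧ ∀ y ∈ ⨆ b ∈ P, q b, killingForm k L x y = 0 := by
  refine ⟨fun hx => ⟨(biSup_mono fun a ha => hUG ha : ⨆ a ∈ U, q a ≤ _) hx,
    fun y hy => killingForm_eq_zero_of_mem_biSup hq hbracket hUP hx hy⟩, ?_⟩
  rintro ⟨hx, horth⟩
  rw [← union_sdiff_cancel hUG, iSup_union] at hx
  obtain ⟨xu, hxu, xv, hxv, rfl⟩ := Submodule.mem_sup.1 hx
  suffices xv = 0 by rwa [this, add_zero]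
  refine eq_zero_of_mem_biSup_of_killingForm_eq_zero hq hbracket hκ hxv fun y hy => ?_
  have hyP : y ∈ ⨆ b ∈ P, q b := (biSup_mono fun b hb => hGP hb : _ ≤ ⨆ b ∈ P, q b) hy
  rw [← horth y hyP, map_add, LinearMap.add_apply,
    killingForm_eq_zero_of_mem_biSup hq hbracket hUP hxu hyP, zero_add]

end LieAlgebra

theorem spiral_nilradical_eq_killing_orthogonal_general
    (k : Type*) [Field k]
    (L : Type*) [LieRing L] [LieAlgebra k L] [Module.Finite k L]
    (m : ℕ)
    (q : ℤ × ZMod m → Submodule k L)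
    (hdecomp : DirectSum.IsInternal q)
    (hbracket : ∀ a b : ℤ × ZMod m, ∀ x ∈ q a, ∀ y ∈ q b, ⁅x, y⁆ ∈ q (a + b))
    (hkilling : (killingForm k L).Nondegenerate)
    (s : ℤ)
    (p u gbar : ℤ → Submodule k L)
    (hp : ∀ N : ℤ, p N = ⨆ c ∈ {c : ℤ | s * N ≤ c}, q (c, (N : ZMod m)))
    (hu : ∀ N : ℤ, u N = ⨆ c ∈ {c : ℤ | s * N < c}, q (c, (N : ZMod m)))
    (hgbar : ∀ N : ℤ, gbar N = ⨆ c : ℤ, q (c, (N : ZMod m))) :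
    ∀ (N : ℤ) (x : L),
      x ∈ u N ↔ (x ∈ gbar N ∧ ∀ y ∈ p (-N), killingForm k L x y = 0) := by
  intro N x
  set f : ℤ → ℤ × ZMod m := fun c => (c, (N : ZMod m))
  set g : ℤ → ℤ × ZMod m := fun c => (c, ((-N : ℤ) : ZMod m))
  rw [hu, hgbar, hp, ← iSup_image (f := f) (g := q), ← iSup_range (f := f) (g := q),
    ← iSup_image (f := g) (g := q)]
  refine LieAlgebra.mem_biSup_iff_mem_biSup_and_killingForm_eq_zero hdecomp hbracket hkilling
    (image_subset_range _ _) ?_ ?_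
  · rintro _ ⟨c, hc, rfl⟩ _ ⟨c', hc', rfl⟩ h
    have hsum := congrArg Prod.fst h
    simp only [mem_ofPred_eq, f, g, Prod.fst_add, Prod.fst_zero] at hc hc' hsum
    linarith
  · rintro a ⟨⟨c, hc⟩, hnot⟩
    refine ⟨-c, ?_, ?_⟩
    · have hcV : ¬ s * N < c := fun h => hnot ⟨c, h, hc⟩
      simp only [mem_ofPred_eq]
      linarith
    · rw [← neg_neg a, ← hc]
      simp [f, g]

/-- The description in 2.5 of the nilradical of an `ε`-spiral (with `s = rε`): for a
`(ℤ × ℤ/m)`-bigraded finite-dimensional Lie algebra with nondegenerate Killing form,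
`u_N` is exactly the set of elements of `g_{N̄}` that are Killing-orthogonal to `p_{-N}`. -/
theorem spiral_nilradical_eq_killing_orthogonal
    (k : Type*) [Field k]
    (L : Type*) [LieRing L] [LieAlgebra k L] [Module.Finite k L]
    (m : ℕ) (hm : 1 ≤ m)
    (q : ℤ × ZMod m → Submodule k L)
    (hdecomp : DirectSum.IsInternal q)
    (hbracket : ∀ a b : ℤ × ZMod m, ∀ x ∈ q a, ∀ y ∈ q b, ⁅x, y⁆ ∈ q (a + b))
    (hkilling : (killingForm k L).Nondegenerate)
    (s : ℤ)
    (p u gbar : ℤ → Submodule k L)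
    (hp : ∀ N : ℤ, p N = ⨆ c ∈ {c : ℤ | s * N ≤ c}, q (c, (N : ZMod m)))
    (hu : ∀ N : ℤ, u N = ⨆ c ∈ {c : ℤ | s * N < c}, q (c, (N : ZMod m)))
    (hgbar : ∀ N : ℤ, gbar N = ⨆ c : ℤ, q (c, (N : ZMod m))) :
    ∀ (N : ℤ) (x : L),
      x ∈ u N ↔ (x ∈ gbar N ∧ ∀ y ∈ p (-N), killingForm k L x y = 0) :=
  spiral_nilradical_eq_killing_orthogonal_general k L m q hdecomp hbracket hkilling s p u gbar hp hu
    hgbar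
end

section
/- Let k be a field, let m ≥ 1 and r ≥ 1 be integers, and let ζ' ∈ kˣ be an element of multiplicative order rm. Let g be a finite-dimensional Lie algebra over k equipped with a (ℤ × ℤ/m)-bigrading (q(k,i))_{(k,i) ∈ ℤ × ℤ/m}, and let σ : g → g be the k-linear map whose restriction to q(k, i) is multiplication by ζ'^{r·i₀ − k} for any representative i₀ ∈ ℤ of i (this is well defined since ζ'^{rm} = 1, negative exponents being interpreted in kˣ). Then σ is a Lie algebra automorphism of g and its fixed-point set {x ∈ g : σ(x) = x} equals ⊕_{N ∈ ℤ} q(rN, N̄). (The computation proving 2.6(c), identifying a splitting of a spiral as the fixed-point subalgebra of a finite-order automorphism.) -/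
/-!
On the piece `q (c, i)` the map `σ` is multiplication by `χ (c, i) = ζ' ^ (r * i₀ - c)`, and `χ` is
a character of `ℤ × ℤ/m` because `ζ' ^ (r * m) = 1`. A linear map acting by units on the pieces
of an internal direct sum is bijective; multiplicativity of `χ` together with
`⁅q a, q b⁆ ⊆ q (a + b)` makes it a Lie map; and its fixed vectors are the sums of the pieces on
which `χ = 1`. Finally `χ (c, i₀) = 1` iff `r * m ∣ r * i₀ - c`, i.e. iff `(c, i₀) = (r N, N̄)`
with `N = i₀ - m t`.
-/

open DirectSum

section Components

variable {ι R M : Type*} [Semiring R] [AddCommMonoid M] [Module R M]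
  {q : ι → Submodule R M} {f : M →ₗ[R] M} {c : ι → R}

theorem DirectSum.decompose_map_apply_of_forall_mem_smul [DecidableEq ι] [Decomposition q]
    (hf : ∀ a, ∀ x ∈ q a, f x = c a • x) (x : M) (a : ι) :
    (decompose q (f x) a : M) = c a • (decompose q x a : M) := by
  induction x using DirectSum.Decomposition.inductionOn q with
  | zero => simp
  | homogeneous y =>
    rw [hf _ y y.2]
    obtain rfl | hne := eq_or_ne ‹ι› a
    · rw [decompose_smul, smul_apply, SetLike.val_smul, decompose_coe, of_eq_same]
    · rw [decompose_of_mem_ne q (Submodule.smul_mem _ _ y.2) hne,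
        decompose_of_mem_ne q y.2 hne, smul_zero]
  | add y z hy hz =>
    simp only [map_add, decompose_add, add_apply, Submodule.coe_add, hy, hz, smul_add]

theorem DirectSum.IsInternal.injective_of_forall_mem_smul [DecidableEq ι] (hq : IsInternal q)
    (hf : ∀ a, ∀ x ∈ q a, f x = c a • x) (hc : ∀ a, IsUnit (c a)) : Function.Injective f := by
  let _ := hq.chooseDecomposition
  intro x y hxy
  apply (decompose q).injective
  ext a
  have hcomp := congrArg (fun z => (decompose q z a : M)) hxy
  simp only [decompose_map_apply_of_forall_mem_smul hf] at hcomp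
  exact (hc a).smul_left_cancel.mp hcomp

theorem LinearMap.surjective_of_forall_mem_smul (hq : ⨆ a, q a = ⊤)
    (hf : ∀ a, ∀ x ∈ q a, f x = c a • x) (hc : ∀ a, IsUnit (c a)) : Function.Surjective f := by
  rw [← LinearMap.range_eq_top, eq_top_iff, ← hq, iSup_le_iff]
  intro a y hy
  obtain ⟨u, hu⟩ := hc a
  refine ⟨u⁻¹ • y, ?_⟩
  rw [LinearMap.map_smul_of_tower, hf a y hy, ← hu, ← Units.smul_def, inv_smul_smul]

end Components

theorem DirectSum.IsInternal.apply_eq_self_iff_of_forall_mem_smul {ι K M : Type*}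
    [DecidableEq ι] [DivisionRing K] [AddCommGroup M] [Module K M] {q : ι → Submodule K M}
    {f : M →ₗ[K] M} {c : ι → K} (hq : IsInternal q) (hf : ∀ a, ∀ x ∈ q a, f x = c a • x)
    (x : M) : f x = x ↔ x ∈ ⨆ a ∈ c ⁻¹' {1}, q a := by
  classical
  let _ := hq.chooseDecomposition
  constructor
  · intro hx
    rw [← sum_support_decompose q x]
    refine Submodule.sum_mem _ fun a _ => ?_
    have hfix : c a • (decompose q x a : M) = decompose q x a := by
      rw [← decompose_map_apply_of_forall_mem_smul hf, hx]
    by_cases hca : c a = 1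
    · exact Submodule.mem_iSup_of_mem a (Submodule.mem_iSup_of_mem hca (decompose q x a).2)
    · have hzero : (c a - 1) • (decompose q x a : M) = 0 := by
        rw [sub_smul, one_smul, hfix, sub_self]
      rw [(smul_eq_zero.mp hzero).resolve_left (sub_ne_zero.mpr hca)]
      exact zero_mem _
  · intro hx
    suffices h : ⨆ a ∈ c ⁻¹' {1}, q a ≤ LinearMap.ker (f - LinearMap.id) by
      simpa [sub_eq_zero] using h hx
    refine iSup₂_le fun a (hca : c a = 1) y hy => ?_
    simp [hf a y hy, hca]

theorem map_lie_of_forall_mem_smul {ι R L : Type*} [Add ι] [CommRing R] [LieRing L]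
    [LieAlgebra R L] {q : ι → Submodule R L} {f : L →ₗ[R] L} {c : ι → R} (hq : ⨆ a, q a = ⊤)
    (hbracket : ∀ a b, ∀ x ∈ q a, ∀ y ∈ q b, ⁅x, y⁆ ∈ q (a + b))
    (hf : ∀ a, ∀ x ∈ q a, f x = c a • x) (hc : ∀ a b, c (a + b) = c a * c b) (x y : L) :
    f ⁅x, y⁆ = ⁅f x, f y⁆ := by
  have hmem (z : L) : z ∈ ⨆ a, q a := hq ▸ Submodule.mem_top
  induction hmem x using Submodule.iSup_induction' generalizing y with
  | mem a x hx =>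
    induction hmem y using Submodule.iSup_induction' with
    | mem b y hy =>
      rw [hf a x hx, hf b y hy, hf (a + b) _ (hbracket a b x hx y hy), smul_lie, lie_smul,
        smul_smul, hc]
    | zero => simp
    | add y z _ _ hy hz => rw [lie_add, map_add, hy, hz, map_add, lie_add]
  | zero => simp
  | add x x' _ _ hx hx' => rw [add_lie, map_add, hx, hx', map_add, add_lie]

section Character

variable {G : Type*} [Group G] {ζ : G} {r m : ℕ}

theorem zpow_mul_sub_eq_of_intCast_eq (hζ : orderOf ζ = r * m) {i j : ℤ}
    (hij : (i : ZMod m) = j) (c : ℤ) : ζ ^ ((r : ℤ) * i - c) = ζ ^ ((r : ℤ) * j - c) := by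
  rw [ZMod.intCast_eq_intCast_iff] at hij
  rw [zpow_eq_zpow_iff_modEq, hζ, Nat.cast_mul]
  exact (hij.mul_left' (c := (r : ℤ))).sub_right c

/-- `ZMod.cast` picks a representative of `a.2` (the identity when `m = 0`); by
`bigradingCharacter_mk_intCast` every representative gives the same value. -/
def bigradingCharacter (ζ : G) (r m : ℕ) (a : ℤ × ZMod m) : G :=
  ζ ^ ((r : ℤ) * (a.2.cast : ℤ) - a.1)

theorem bigradingCharacter_mk_intCast (hζ : orderOf ζ = r * m) (c i : ℤ) :
    bigradingCharacter ζ r m (c, (i : ZMod m)) = ζ ^ ((r : ℤ) * i - c) :=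
  zpow_mul_sub_eq_of_intCast_eq hζ (ZMod.intCast_zmod_cast _) c

theorem bigradingCharacter_add (hζ : orderOf ζ = r * m) (a b : ℤ × ZMod m) :
    bigradingCharacter ζ r m (a + b) =
      bigradingCharacter ζ r m a * bigradingCharacter ζ r m b := by
  obtain ⟨c, i⟩ := a
  obtain ⟨c', i'⟩ := b
  obtain ⟨i, rfl⟩ := ZMod.intCast_surjective i
  obtain ⟨i', rfl⟩ := ZMod.intCast_surjective i'
  rw [Prod.mk_add_mk, ← Int.cast_add, bigradingCharacter_mk_intCast hζ,
    bigradingCharacter_mk_intCast hζ, bigradingCharacter_mk_intCast hζ, ← zpow_add]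
  ring_nf

theorem bigradingCharacter_eq_one_iff (hζ : orderOf ζ = r * m) (a : ℤ × ZMod m) :
    bigradingCharacter ζ r m a = 1 ↔ ∃ N : ℤ, ((r : ℤ) * N, (N : ZMod m)) = a := by
  obtain ⟨c, i⟩ := a
  obtain ⟨i, rfl⟩ := ZMod.intCast_surjective i
  rw [bigradingCharacter_mk_intCast hζ, ← orderOf_dvd_iff_zpow_eq_one, hζ]
  constructor
  · rintro ⟨t, ht⟩
    refine ⟨i - m * t, Prod.ext ?_ (by simp)⟩
    push_cast at ht
    dsimp only
    linear_combination ht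
  · rintro ⟨N, hN⟩
    simp only [Prod.mk.injEq, ZMod.intCast_eq_intCast_iff] at hN
    obtain ⟨rfl, hN⟩ := hN
    obtain ⟨t, ht⟩ := hN.dvd
    exact ⟨t, by push_cast; linear_combination (r : ℤ) * ht⟩

end Character

theorem splitting_as_fixed_points_of_automorphism_general
    (k : Type*) [Field k]
    (m r : ℕ)
    (ζ' : kˣ) (hζ' : orderOf ζ' = r * m)
    (L : Type*) [LieRing L] [LieAlgebra k L]
    (q : ℤ × ZMod m → Submodule k L)
    (hdecomp : DirectSum.IsInternal q)
    (hbracket : ∀ a b : ℤ × ZMod m, ∀ x ∈ q a, ∀ y ∈ q b, ⁅x, y⁆ ∈ q (a + b))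
    (σ : L →ₗ[k] L)
    (hσ : ∀ (c i₀ : ℤ), ∀ x ∈ q (c, (i₀ : ZMod m)),
      σ x = ((ζ' ^ ((r : ℤ) * i₀ - c) : kˣ) : k) • x) :
    Function.Bijective σ ∧
    (∀ x y : L, σ ⁅x, y⁆ = ⁅σ x, σ y⁆) ∧
    (∀ x : L, σ x = x ↔ x ∈ ⨆ N : ℤ, q ((r : ℤ) * N, (N : ZMod m))) := by
  set χ : ℤ × ZMod m → k := fun a => (bigradingCharacter ζ' r m a : kˣ)
  have hσχ : ∀ a, ∀ x ∈ q a, σ x = χ a • x := by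
    rintro ⟨c, i⟩ x hx
    obtain ⟨i, rfl⟩ := ZMod.intCast_surjective i
    rw [hσ c i x hx, ← bigradingCharacter_mk_intCast hζ']
  have hunit (a) : IsUnit (χ a) := Units.isUnit _
  have hχ_add (a b) : χ (a + b) = χ a * χ b := by simp [χ, bigradingCharacter_add hζ']
  have hχ_fixed : χ ⁻¹' {1} = Set.range fun N : ℤ => ((r : ℤ) * N, (N : ZMod m)) := by
    ext a
    simp [χ, bigradingCharacter_eq_one_iff hζ']
  have hspan := hdecomp.submodule_iSup_eq_top
  refine ⟨⟨hdecomp.injective_of_forall_mem_smul hσχ hunit,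
    LinearMap.surjective_of_forall_mem_smul hspan hσχ hunit⟩,
    map_lie_of_forall_mem_smul hspan hbracket hσχ hχ_add, fun x => ?_⟩
  rw [hdecomp.apply_eq_self_iff_of_forall_mem_smul hσχ, hχ_fixed, iSup_range]

/-- The computation proving 2.6(c): for a `(ℤ × ℤ/m)`-bigraded finite-dimensional Lie
algebra and `ζ'` a unit of multiplicative order `rm`, the linear map `σ` acting on
`q(c, i)` by `ζ'^{r·i₀ - c}` (for any representative `i₀` of `i`) is a Lie algebra
automorphism whose fixed-point set is `⊕_{N ∈ ℤ} q(rN, N̄)`. -/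
theorem splitting_as_fixed_points_of_automorphism
    (k : Type*) [Field k]
    (m r : ℕ) (hm : 1 ≤ m) (hr : 1 ≤ r)
    (ζ' : kˣ) (hζ' : orderOf ζ' = r * m)
    (L : Type*) [LieRing L] [LieAlgebra k L] [Module.Finite k L]
    (q : ℤ × ZMod m → Submodule k L)
    (hdecomp : DirectSum.IsInternal q)
    (hbracket : ∀ a b : ℤ × ZMod m, ∀ x ∈ q a, ∀ y ∈ q b, ⁅x, y⁆ ∈ q (a + b))
    (σ : L →ₗ[k] L)
    (hσ : ∀ (c i₀ : ℤ), ∀ x ∈ q (c, (i₀ : ZMod m)),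
      σ x = ((ζ' ^ ((r : ℤ) * i₀ - c) : kˣ) : k) • x) :
    Function.Bijective σ ∧
    (∀ x y : L, σ ⁅x, y⁆ = ⁅σ x, σ y⁆) ∧
    (∀ x : L, σ x = x ↔ x ∈ ⨆ N : ℤ, q ((r : ℤ) * N, (N : ZMod m))) :=
  splitting_as_fixed_points_of_automorphism_general k m r ζ' hζ' L q hdecomp hbracket σ hσ
end
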